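/- arXiv:0909.5518 — 3 statements merged into one kernel-verified Lean document; each statement's English description precedes it below -/
import Mathlib

section
/- Let u_1,...,u_k ≥ 0 with k ≥ 3 and Σ u_i = 1. Then Σ_{i=1}^k max{u_i, √(u_i(1−u_i))} ≤ √(k−1). -/
/-- Cauchy–Schwarz in sqrt form. -/
lemma sum_sqrt_mul_le {ι : Type*} (s : Finset ι) (f g : ι → ℝ)
    (hf : ∀ i ∈ s, 0 ≤ f i) (hg : ∀ i ∈ s, 0 ≤ g i) :
    ∑ i ∈ s, Real.sqrt (f i * g i) ≤ Real.sqrt ((∑ i ∈ s, f i) * (∑ i ∈ s, g i)) := by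
  have h1 : ∑ i ∈ s, Real.sqrt (f i * g i) = ∑ i ∈ s, Real.sqrt (f i) * Real.sqrt (g i) :=
    Finset.sum_congr rfl fun i hi => Real.sqrt_mul (hf i hi) _
  rw [h1]
  have hnn : 0 ≤ ∑ i ∈ s, Real.sqrt (f i) * Real.sqrt (g i) :=
    Finset.sum_nonneg fun i hi => mul_nonneg (Real.sqrt_nonneg _) (Real.sqrt_nonneg _)
  rw [Real.le_sqrt hnn (mul_nonneg (Finset.sum_nonneg hf) (Finset.sum_nonneg hg))]
  calc (∑ i ∈ s, Real.sqrt (f i) * Real.sqrt (g i)) ^ 2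
      ≤ (∑ i ∈ s, Real.sqrt (f i) ^ 2) * ∑ i ∈ s, Real.sqrt (g i) ^ 2 :=
        Finset.sum_mul_sq_le_sq_mul_sq s _ _
    _ = (∑ i ∈ s, f i) * (∑ i ∈ s, g i) := by
        rw [Finset.sum_congr rfl fun i hi => Real.sq_sqrt (hf i hi),
          Finset.sum_congr rfl fun i hi => Real.sq_sqrt (hg i hi)]

lemma key_ineq (K v : ℝ) (hK : 2 ≤ K) (hv : 1/2 ≤ v) (hv1 : v ≤ 1) :
    v + Real.sqrt ((1 - v) * (K - 1 + v)) ≤ Real.sqrt K := by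
  have hc : Real.sqrt K ^ 2 = K := Real.sq_sqrt (by linarith)
  have hc1 : 1 ≤ Real.sqrt K := by
    rw [show (1:ℝ) = Real.sqrt 1 by simp]
    exact Real.sqrt_le_sqrt (by linarith)
  have h2 : Real.sqrt ((1 - v) * (K - 1 + v)) ≤ Real.sqrt K - v := by
    have hge : 0 ≤ Real.sqrt K - v := by linarith
    have : (1 - v) * (K - 1 + v) ≤ (Real.sqrt K - v) ^ 2 := by
      nlinarith [sq_nonneg (v * Real.sqrt K - 1), mul_nonneg (mul_nonneg (by linarith : (0:ℝ) ≤ v) (by linarith : (0:ℝ) ≤ 1 - v)) (by linarith : (0:ℝ) ≤ K - 2)]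
    calc Real.sqrt ((1 - v) * (K - 1 + v)) ≤ Real.sqrt ((Real.sqrt K - v) ^ 2) :=
          Real.sqrt_le_sqrt this
      _ = Real.sqrt K - v := Real.sqrt_sq hge
  linarith

theorem sum_max_le_sqrt (k : ℕ) (hk : 3 ≤ k) (u : Fin k → ℝ)
    (hu : ∀ i, 0 ≤ u i) (hsum : ∑ i, u i = 1) :
    ∑ i, max (u i) (Real.sqrt (u i * (1 - u i))) ≤ Real.sqrt (k - 1) := by
  have hKk : (2:ℝ) ≤ (k:ℝ) - 1 := by
    have : (3:ℝ) ≤ (k:ℝ) := by exact_mod_cast hk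
    linarith
  have hu1 : ∀ i, u i ≤ 1 := by
    intro i
    have := Finset.single_le_sum (f := u) (fun j _ => hu j) (Finset.mem_univ i)
    linarith [hsum ▸ this]
  have hmax_small : ∀ i, u i ≤ 1/2 →
      max (u i) (Real.sqrt (u i * (1 - u i))) = Real.sqrt (u i * (1 - u i)) := by
    intro i hi
    apply max_eq_right
    rcases eq_or_lt_of_le (hu i) with h | h
    · simp [← h]
    · rw [Real.le_sqrt' h]
      nlinarith
  have hcard : ∀ s : Finset (Fin k), ∑ i ∈ s, (1 - u i) = (s.card : ℝ) - ∑ i ∈ s, u i := by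
    intro s; rw [Finset.sum_sub_distrib]; simp
  by_cases hbig : ∃ j, 1/2 < u j
  · obtain ⟨j, hj⟩ := hbig
    have hmaxj : max (u j) (Real.sqrt (u j * (1 - u j))) = u j := by
      apply max_eq_left
      calc Real.sqrt (u j * (1 - u j)) ≤ Real.sqrt ((u j) ^ 2) :=
            Real.sqrt_le_sqrt (by nlinarith)
        _ = u j := Real.sqrt_sq (hu j)
    have hrest : ∀ i ∈ Finset.univ.erase j, u i ≤ 1/2 := by
      intro i hi
      have hij : i ≠ j := (Finset.mem_erase.mp hi).1
      have : u i + u j ≤ 1 := by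
        have := Finset.add_sum_erase Finset.univ u (Finset.mem_univ j)
        have hle : u i ≤ ∑ x ∈ Finset.univ.erase j, u x :=
          Finset.single_le_sum (f := u) (fun x _ => hu x) (Finset.mem_erase.mpr ⟨hij, Finset.mem_univ i⟩)
        linarith [hsum ▸ this]
      linarith
    have hsum_erase : ∑ i ∈ Finset.univ.erase j, u i = 1 - u j := by
      have := Finset.add_sum_erase Finset.univ u (Finset.mem_univ j)
      linarith [hsum ▸ this]
    calc ∑ i, max (u i) (Real.sqrt (u i * (1 - u i)))
        = u j + ∑ i ∈ Finset.univ.erase j, max (u i) (Real.sqrt (u i * (1 - u i))) := by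
          rw [← Finset.add_sum_erase Finset.univ _ (Finset.mem_univ j), hmaxj]
      _ = u j + ∑ i ∈ Finset.univ.erase j, Real.sqrt (u i * (1 - u i)) := by
          rw [Finset.sum_congr rfl fun i hi => hmax_small i (hrest i hi)]
      _ ≤ u j + Real.sqrt ((∑ i ∈ Finset.univ.erase j, u i) * (∑ i ∈ Finset.univ.erase j, (1 - u i))) := by
          gcongr
          exact sum_sqrt_mul_le _ _ _ (fun i _ => hu i) (fun i hi => by linarith [hu1 i])
      _ = u j + Real.sqrt ((1 - u j) * (((k:ℝ) - 1) - 1 + u j)) := by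
          rw [hsum_erase, hcard, hsum_erase]
          have : (Finset.univ.erase j).card = k - 1 := by
            rw [Finset.card_erase_of_mem (Finset.mem_univ j)]; simp
          rw [this]
          have hk1 : 1 ≤ k := by omega
          have : ((k - 1 : ℕ) : ℝ) = (k:ℝ) - 1 := by
            push_cast [hk1]; ring
          rw [this]; ring_nf
      _ ≤ Real.sqrt ((k:ℝ) - 1) := key_ineq _ _ hKk (le_of_lt hj) (hu1 j)
  · push_neg at hbig
    calc ∑ i, max (u i) (Real.sqrt (u i * (1 - u i)))
        = ∑ i, Real.sqrt (u i * (1 - u i)) :=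
          Finset.sum_congr rfl fun i _ => hmax_small i (hbig i)
      _ ≤ Real.sqrt ((∑ i, u i) * (∑ i, (1 - u i))) :=
          sum_sqrt_mul_le _ _ _ (fun i _ => hu i) (fun i _ => by linarith [hu1 i])
      _ = Real.sqrt ((k:ℝ) - 1) := by
          rw [hsum, hcard, hsum]
          simp
end

section
/- Let u_1, u_2 ≥ 0 with u_1 + u_2 = 1. Then max{u_1, √(u_1 u_2)} + max{u_2, √(u_1 u_2)} ≤ (1+√2)/2, and consequently (1/(max{u_1,√(u_1u_2)} + max{u_2,√(u_1u_2)}))² ≥ 4/(3+2√2). -/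
lemma aux_two_outcome (a b : ℝ) (ha : 0 ≤ a) (hab : a ≤ b) (hsum : a + b = 1) :
    max a (Real.sqrt (a * b)) + max b (Real.sqrt (a * b)) ≤ (1 + Real.sqrt 2) / 2 := by
  have hb : 0 ≤ b := le_trans ha hab
  have hr : Real.sqrt 2 ^ 2 = 2 := Real.sq_sqrt (by norm_num)
  have hr1 : (1:ℝ) ≤ Real.sqrt 2 := by
    nlinarith [Real.sqrt_nonneg 2]
  have hmax1 : max a (Real.sqrt (a * b)) = Real.sqrt (a * b) := by
    apply max_eq_right
    calc a = Real.sqrt (a * a) := by rw [Real.sqrt_mul_self ha]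
    _ ≤ Real.sqrt (a * b) := Real.sqrt_le_sqrt (by nlinarith)
  have hmax2 : max b (Real.sqrt (a * b)) = b := by
    apply max_eq_left
    calc Real.sqrt (a * b) ≤ Real.sqrt (b * b) := Real.sqrt_le_sqrt (by nlinarith)
    _ = b := Real.sqrt_mul_self hb
  rw [hmax1, hmax2]
  have hs : Real.sqrt (a * b) ≤ (1 + Real.sqrt 2) / 2 - b := by
    rw [Real.sqrt_le_iff]
    refine ⟨by nlinarith, ?_⟩
    have ha' : a = 1 - b := by linarith
    subst ha'
    nlinarith [sq_nonneg (4*b - 2 - Real.sqrt 2), hr, hr1]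
  linarith

theorem two_outcome_constant (u₁ u₂ : ℝ) (h₁ : 0 ≤ u₁) (h₂ : 0 ≤ u₂)
    (hsum : u₁ + u₂ = 1) :
    max u₁ (Real.sqrt (u₁ * u₂)) + max u₂ (Real.sqrt (u₁ * u₂)) ≤
        (1 + Real.sqrt 2) / 2 ∧
      (1 / (max u₁ (Real.sqrt (u₁ * u₂)) + max u₂ (Real.sqrt (u₁ * u₂)))) ^ 2 ≥
        4 / (3 + 2 * Real.sqrt 2) := by
  have hub : max u₁ (Real.sqrt (u₁ * u₂)) + max u₂ (Real.sqrt (u₁ * u₂)) ≤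
      (1 + Real.sqrt 2) / 2 := by
    rcases le_total u₁ u₂ with h | h
    · exact aux_two_outcome u₁ u₂ h₁ h hsum
    · have := aux_two_outcome u₂ u₁ h₂ h (by linarith)
      rw [mul_comm] at this
      linarith
  refine ⟨hub, ?_⟩
  set S := max u₁ (Real.sqrt (u₁ * u₂)) + max u₂ (Real.sqrt (u₁ * u₂)) with hS
  have hS1 : (1:ℝ) ≤ S := by
    have := le_max_left u₁ (Real.sqrt (u₁ * u₂))
    have := le_max_left u₂ (Real.sqrt (u₁ * u₂))
    simp only [hS]; linarith
  have hSpos : 0 < S := by linarith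
  have hr : Real.sqrt 2 ^ 2 = 2 := Real.sq_sqrt (by norm_num)
  have hr0 : (0:ℝ) ≤ Real.sqrt 2 := Real.sqrt_nonneg 2
  have hS2 : S ^ 2 ≤ (3 + 2 * Real.sqrt 2) / 4 := by
    nlinarith
  have hd : (0:ℝ) < 3 + 2 * Real.sqrt 2 := by linarith
  rw [ge_iff_le, div_le_iff₀ hd, one_div, inv_pow, ← one_div, div_mul_eq_mul_div,
    le_div_iff₀ (by positivity)]
  nlinarith
end

section
/- Let σ_0=I, σ_1,...,σ_m be d×d Hermitian with σ_i²=I, Tr σ_i=0, σ_iσ_j=−σ_jσ_i (i≠j). Let x = (1/2, x_1,...,x_m) and y = (1/2, y_1,...,y_m) be vectors in ℝ^{m+1} with Σ_{i≥1} x_i² = Σ_{i≥1} y_i² = 1/4. Define P_a = (1/2)I + (−1)^a Σ_{i≥1} x_i σ_i for a ∈ {0,1} and Q_b = (1/2)I + (−1)^b Σ_{i≥1} y_i σ_i for b ∈ {0,1}. Then for the maximally entangled state |ψ⟩ = (1/√d)Σ_i |i⟩|i⟩, ⟨ψ| P_a ⊗ Q_bᵀ |ψ⟩ = 1/4 + (−1)^{a+b}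 Σ_{i=1}^m x_i y_i, which equals the inner product ⟨v_a | w_b⟩, where v_0 = x, v_1 = e_0 − x, w_0 = y, w_1 = e_0 − y. -/
open Matrix Kronecker

theorem uniform_strategy_correlations (d m : ℕ) (hd : 0 < d)
    (σ : Fin m → Matrix (Fin d) (Fin d) ℂ)
    (hherm : ∀ i, (σ i).IsHermitian)
    (hsq : ∀ i, σ i ^ 2 = 1)
    (htr : ∀ i, (σ i).trace = 0)
    (hanti : ∀ i j, i ≠ j → σ i * σ j = -(σ j * σ i))
    (x y : Fin m → ℝ)
    (hx : ∑ i, x i ^ 2 = 1 / 4) (hy : ∑ i, y i ^ 2 = 1 / 4)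
    (a b : ℕ) :
    let P : ℕ → Matrix (Fin d) (Fin d) ℂ :=
      fun a => (1 / 2 : ℂ) • 1 + ((-1 : ℂ) ^ a) • ∑ i, (x i : ℂ) • σ i
    let Q : ℕ → Matrix (Fin d) (Fin d) ℂ :=
      fun b => (1 / 2 : ℂ) • 1 + ((-1 : ℂ) ^ b) • ∑ i, (y i : ℂ) • σ i
    let ψ : Fin d × Fin d → ℂ :=
      fun p => if p.1 = p.2 then (1 / Real.sqrt d : ℝ) else 0
    let v : ℕ → Fin (m + 1) → ℝ :=
      fun a => Fin.cons (1 / 2) (fun i => (-1 : ℝ) ^ a * x i)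
    let w : ℕ → Fin (m + 1) → ℝ :=
      fun b => Fin.cons (1 / 2) (fun i => (-1 : ℝ) ^ b * y i)
    star ψ ⬝ᵥ ((P a ⊗ₖ (Q b)ᵀ) *ᵥ ψ) =
        ((1 / 4 + (-1 : ℝ) ^ (a + b) * ∑ i, x i * y i : ℝ) : ℂ) ∧
      ∑ i, v a i * w b i = 1 / 4 + (-1 : ℝ) ^ (a + b) * ∑ i, x i * y i := by
  intro P Q ψ v w
  have hd0 : (d : ℂ) ≠ 0 := Nat.cast_ne_zero.mpr hd.ne'
  constructor
  · -- Step 1: ⟨ψ| A ⊗ Bᵀ |ψ⟩ = (1/d) Tr(AB)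
    have hkey : ∀ A B : Matrix (Fin d) (Fin d) ℂ,
        star ψ ⬝ᵥ ((A ⊗ₖ Bᵀ) *ᵥ ψ) = (1 / d : ℂ) * (A * B).trace := by
      intro A B
      simp only [ψ, dotProduct, mulVec, Fintype.sum_prod_type, kroneckerMap_apply, ite_mul,
        mul_ite, Finset.mul_sum, Matrix.trace, Matrix.mul_apply, Matrix.diag, Finset.sum_mul,
        Pi.star_apply, star_zero, zero_mul, mul_zero, Finset.sum_ite_eq, Finset.sum_ite_eq',
        Finset.mem_univ, if_true, transpose_apply, apply_ite (star : ℂ → ℂ),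
        Finset.sum_ite_irrel, Finset.sum_const_zero]
      have h : star ((1 / Real.sqrt d : ℝ) : ℂ) * ((1 / Real.sqrt d : ℝ) : ℂ) = 1 / d := by
        rw [Complex.star_def, Complex.conj_ofReal, ← Complex.ofReal_mul]
        rw [div_mul_div_comm, one_mul, Real.mul_self_sqrt (Nat.cast_nonneg d)]
        push_cast; ring
      refine Finset.sum_congr rfl fun i _ => Finset.sum_congr rfl fun k _ => ?_
      rw [show star ((1 / Real.sqrt d : ℝ) : ℂ) * (A i k * B k i * ((1 / Real.sqrt d : ℝ) : ℂ))
          = (star ((1 / Real.sqrt d : ℝ) : ℂ) * ((1 / Real.sqrt d : ℝ) : ℂ)) * (A i k * B k i)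
        by ring, h]
    -- Step 2: trace of σ i * σ j
    have hσtr : ∀ i j, (σ i * σ j).trace = if i = j then (d : ℂ) else 0 := by
      intro i j
      by_cases h : i = j
      · subst h
        simp [← pow_two, hsq i, Matrix.trace_one]
      · have h1 : (σ i * σ j).trace = -(σ j * σ i).trace := by
          rw [hanti i j h]; simp
        rw [Matrix.trace_mul_comm (σ j) (σ i)] at h1
        simp only [h, if_false]
        exact add_self_eq_zero.mp (add_eq_zero_iff_eq_neg.mpr h1)
    -- Step 3: trace of P a * Q b
    have hPQ : (P a * Q b).trace
        = (d : ℂ) * (1 / 4 + (-1) ^ (a + b) * ∑ i, (x i : ℂ) * y i) := by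
      simp only [P, Q]
      rw [add_mul, mul_add, mul_add, smul_mul_smul_comm, smul_mul_smul_comm, smul_mul_smul_comm,
        smul_mul_smul_comm]
      simp only [Matrix.trace_add, Matrix.trace_smul, one_mul, mul_one]
      rw [Finset.sum_mul_sum]
      simp only [Matrix.trace_one, Matrix.trace_sum, Matrix.trace_smul, smul_mul_smul_comm,
        htr, smul_zero, Finset.sum_const_zero, smul_eq_mul, mul_zero, hσtr]
      simp only [mul_ite, mul_zero, Finset.sum_ite_eq, Finset.mem_univ, if_true,
        Fintype.card_fin, pow_add, Finset.mul_sum]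
      rw [zero_add, add_zero, mul_add, Finset.mul_sum]
      congr 1
      · ring
      · exact Finset.sum_congr rfl fun i _ => by ring
    rw [hkey, hPQ, ← mul_assoc, one_div, inv_mul_cancel₀ hd0, one_mul]
    push_cast
    ring
  · -- vector inner product
    simp only [v, w, Fin.sum_univ_succ, Fin.cons_zero, Fin.cons_succ, pow_add,
      Finset.mul_sum]
    rw [show (1 / 2 : ℝ) * (1 / 2) = 1 / 4 by norm_num]
    congr 1
    exact Finset.sum_congr rfl fun i _ => by ring
end
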